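/- Let K be a type of depot indices, let m walks be represented by a function f : Fin m → K × K assigning to each walk its start depot index and end depot index, and suppose that for every k ∈ K the number of walks starting at depot k equals the number of walks ending at depot k, i.e., |{i : (f i).1 = k}| = |{i : (f i).2 = k}|. If there exists i₀ with (f i₀).1 ≠ (f i₀).2 (an infeasible walk), then there exists another index i ≠ i₀ with (f i).1 ≠ (f i).2. Hence whenever one infeasible path is found in a candidate solution, at least one other infeasible path exists. -/

import Mathlib

/-! If `i₀` were the only walk whose endpoints differ, depot `(f i₀).1` would have exactly one
more walk starting at it than ending at it. -/

open Finset

theorem card_filter_eq_add_one_of_eq_off_point {ι K : Type*} [Fintype ι] [DecidableEq ι]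
    [DecidableEq K] {p q : ι → K} {i₀ : ι} (hpq : ∀ i ≠ i₀, p i = q i) (hne : p i₀ ≠ q i₀) :
    #{i | q i = p i₀} + 1 = #{i | p i = p i₀} := by
  have hfiber : ({i | q i = p i₀} : Finset ι) = ({i | p i = p i₀} : Finset ι).erase i₀ := by
    ext i
    simp only [mem_erase, mem_filter, mem_univ, true_and]
    by_cases hi : i = i₀
    · subst hi
      simpa using hne.symm
    · simp [hi, hpq i hi]
  rw [hfiber]
  exact card_erase_add_one (by simp)

/-- If the number of walks starting at each depot equals the number of walks
ending there, and one walk is infeasible (start depot ≠ end depot), then some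
other walk is infeasible as well. -/
theorem infeasible_path_not_alone
    {K : Type*} [DecidableEq K] (m : ℕ) (f : Fin m → K × K)
    (hbal : ∀ k : K,
      (Finset.univ.filter (fun i : Fin m => (f i).1 = k)).card =
      (Finset.univ.filter (fun i : Fin m => (f i).2 = k)).card)
    (i₀ : Fin m) (h : (f i₀).1 ≠ (f i₀).2) :
    ∃ i : Fin m, i ≠ i₀ ∧ (f i).1 ≠ (f i).2 := by
  by_contra! hfeasible
  have hcount := card_filter_eq_add_one_of_eq_off_point (p := fun i => (f i).1)
    (q := fun i => (f i).2) hfeasible h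
  have hbalanced := hbal (f i₀).1
  omega
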